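/- For the crystal structure on multisegments, ε_i(m) equals the number of minus signs remaining after applying the signature rule: list segments in crystal order, write − for each ⟨i,j⟩ and + for each ⟨i+2,j⟩, and repeatedly delete adjacent pairs +−. -/

import Mathlib

noncomputable section

/-- Validity of a segment `⟨i,j⟩` over `ℤ_odd`: both endpoints odd and `i ≤ j`. -/
def SegP (p : ℤ × ℤ) : Prop := Odd p.1 ∧ Odd p.2 ∧ p.1 ≤ p.2

instance : DecidablePred SegP := fun p => by unfold SegP; infer_instance

/-- A segment `⟨i,j⟩` over `ℤ_odd`. -/
def SegIdx : Type := {p : ℤ × ℤ // SegP p}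

instance : DecidableEq SegIdx := Subtype.instDecidableEq

/-- A multisegment. -/
abbrev MSeg := SegIdx →₀ ℕ

/-- The multiplicity `m_{ij}` of `⟨i,j⟩` in `m`. -/
def cnt (m : MSeg) (i j : ℤ) : ℕ := if h : SegP (i, j) then m ⟨(i, j), h⟩ else 0

/-- `A_k^{(i)}(m) = Σ_{k'≥k} (m_{i,k'} − m_{i+2,k'+2})`. -/
def Afun (i k : ℤ) (m : MSeg) : ℤ :=
  ∑ s ∈ m.support, ((if s.1.1 = i ∧ k ≤ s.1.2 then (m s : ℤ) else 0)
    - (if s.1.1 = i + 2 ∧ k + 2 ≤ s.1.2 then (m s : ℤ) else 0))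

/-- `ε_i(m) = max({A_k^{(i)}(m) | k ≥ i} ∪ {0})`. -/
def epsA (i : ℤ) (m : MSeg) : ℤ := sSup ({0} ∪ {z : ℤ | ∃ k, i ≤ k ∧ z = Afun i k m})

/-- Signs used in the signature rule. -/
inductive Sign where
  | plus : Sign
  | minus : Sign
deriving DecidableEq

/-- The signature word of `m` for color `i`: segments are listed in (decreasing) crystal
ordering, each segment `⟨i,j⟩` contributes a `−` and each segment `⟨i+2,j⟩` a `+`
(for equal `j`, `⟨i,j⟩ ≥_cry ⟨i+2,j⟩` comes first). -/
def sigList (i : ℤ) (m : MSeg) : List Sign :=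
  (((m.support.image fun s => s.1.2).sort (· ≤ ·)).reverse).flatMap fun j =>
    List.replicate (cnt m i j) Sign.minus ++ List.replicate (cnt m (i + 2) j) Sign.plus

/-- One step of the signature rule: delete an adjacent pair `+−`. -/
inductive SigStep : List Sign → List Sign → Prop where
  | cancel (a b : List Sign) :
      SigStep (a ++ [Sign.plus, Sign.minus] ++ b) (a ++ b)

/-- A word is reduced when no adjacent pair `+−` remains. -/
def SigReduced (L : List Sign) : Prop := ∀ a b : List Sign, L ≠ a ++ [Sign.plus, Sign.minus] ++ b

/-!
Count `−` as `+1` and `+` as `−1`. The maximal weight of a prefix of a word does not change when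
a factor `+−` is deleted, and for a reduced word `−^p +^q` it is `p`; so it suffices to show that
`ε_i(m)` is the maximal prefix weight of the signature word. That word is the concatenation of the
blocks `−^{m_{i,j}} +^{m_{i+2,j}}` over the levels `j` in decreasing order, and distinct levels,
being odd, differ by at least `2`. Hence `A_k^{(i)}(m)` is the weight of the prefix formed by the
blocks of levels `≥ k + 2` followed by the `−`s of level `k` or `k + 1`, and a maximal prefix is
either empty or ends right after the `−`s of a level `k` with `m_{i,k} ≠ 0`, so that `k ≥ i`.
-/

def Sign.val : Sign → ℤ
  | .plus => -1
  | .minus => 1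

/-- The largest value of `#− − #+` over the prefixes of a word, the empty prefix included. -/
def maxPrefixSum : List Sign → ℤ
  | [] => 0
  | x :: L => max 0 (x.val + maxPrefixSum L)

lemma maxPrefixSum_nonneg (L : List Sign) : 0 ≤ maxPrefixSum L := by
  cases L <;> simp [maxPrefixSum]

lemma maxPrefixSum_replicate_minus_append (n : ℕ) (L : List Sign) :
    maxPrefixSum (List.replicate n .minus ++ L) = n + maxPrefixSum L := by
  induction n with
  | zero => simp
  | succ n ih =>
    rw [List.replicate_succ, List.cons_append, maxPrefixSum, ih]
    have := maxPrefixSum_nonneg L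
    simp only [Sign.val]
    omega

lemma maxPrefixSum_replicate_plus_append (n : ℕ) (L : List Sign) :
    maxPrefixSum (List.replicate n .plus ++ L) = max 0 (maxPrefixSum L - n) := by
  induction n with
  | zero => simp [maxPrefixSum_nonneg]
  | succ n ih =>
    rw [List.replicate_succ, List.cons_append, maxPrefixSum, ih]
    simp only [Sign.val]
    omega

lemma maxPrefixSum_append_plus_minus_append (a b : List Sign) :
    maxPrefixSum (a ++ [.plus, .minus] ++ b) = maxPrefixSum (a ++ b) := by
  induction a with
  | nil =>
    have := maxPrefixSum_nonneg b
    simp only [List.nil_append, List.cons_append, maxPrefixSum, Sign.val]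
    omega
  | cons x a ih => simp only [List.cons_append, maxPrefixSum] at ih ⊢; rw [ih]

lemma SigStep.maxPrefixSum_eq {L M : List Sign} (h : SigStep L M) :
    maxPrefixSum L = maxPrefixSum M := by
  cases h
  exact maxPrefixSum_append_plus_minus_append _ _

lemma maxPrefixSum_eq_of_reflTransGen {L M : List Sign}
    (h : Relation.ReflTransGen SigStep L M) : maxPrefixSum L = maxPrefixSum M := by
  induction h with
  | refl => rfl
  | tail _ hstep ih => exact ih.trans hstep.maxPrefixSum_eq

lemma SigReduced.of_cons {x : Sign} {L : List Sign} (h : SigReduced (x :: L)) : SigReduced L :=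
  fun a b hab => h (x :: a) b (by simp [hab])

lemma SigReduced.exists_eq_replicate_append_replicate {L : List Sign} (h : SigReduced L) :
    ∃ p q, L = List.replicate p .minus ++ List.replicate q .plus := by
  induction L with
  | nil => exact ⟨0, 0, rfl⟩
  | cons x L ih =>
    obtain ⟨p, q, rfl⟩ := ih h.of_cons
    cases x with
    | minus => exact ⟨p + 1, q, rfl⟩
    | plus =>
      cases p with
      | zero => exact ⟨0, q + 1, rfl⟩
      | succ p =>
        refine (h [] (List.replicate p .minus ++ List.replicate q .plus) ?_).elim
        simp [List.replicate_succ]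

lemma SigReduced.count_minus_eq_maxPrefixSum {L : List Sign} (h : SigReduced L) :
    (L.count .minus : ℤ) = maxPrefixSum L := by
  obtain ⟨p, q, rfl⟩ := h.exists_eq_replicate_append_replicate
  have hq : maxPrefixSum (List.replicate q .plus) = 0 := by
    simpa [maxPrefixSum] using maxPrefixSum_replicate_plus_append q []
  simp [maxPrefixSum_replicate_minus_append, hq, List.count_replicate]

section Blocks

variable (a b : ℤ → ℕ)

def blockWord (js : List ℤ) : List Sign :=
  js.flatMap fun j => List.replicate (a j) .minus ++ List.replicate (b j) .plus

def cutSum (js : List ℤ) (k : ℤ) : ℤ :=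
  (js.map fun j => (if k ≤ j then (a j : ℤ) else 0) - if k + 2 ≤ j then (b j : ℤ) else 0).sum

lemma maxPrefixSum_blockWord_cons (j : ℤ) (js : List ℤ) :
    maxPrefixSum (blockWord a b (j :: js)) =
      a j + max 0 (maxPrefixSum (blockWord a b js) - b j) := by
  rw [blockWord, List.flatMap_cons, List.append_assoc, maxPrefixSum_replicate_minus_append,
    maxPrefixSum_replicate_plus_append, blockWord]

lemma cutSum_cons (j : ℤ) (js : List ℤ) (k : ℤ) :
    cutSum a b (j :: js) k =
      (if k ≤ j then (a j : ℤ) else 0) - (if k + 2 ≤ j then (b j : ℤ) else 0) + cutSum a b js k :=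
  List.sum_cons

lemma cutSum_eq_zero_of_forall_lt {js : List ℤ} {k : ℤ} (h : ∀ j ∈ js, j < k) :
    cutSum a b js k = 0 := by
  refine List.sum_eq_zero fun x hx => ?_
  obtain ⟨j, hj, rfl⟩ := List.mem_map.1 hx
  have := h j hj
  rw [if_neg (by omega), if_neg (by omega), sub_zero]

variable {a b} {js : List ℤ}

lemma cutSum_le_maxPrefixSum_blockWord (hjs : js.Pairwise fun x y => y + 2 ≤ x) (k : ℤ) :
    cutSum a b js k ≤ maxPrefixSum (blockWord a b js) := by
  induction js with
  | nil => simp [cutSum, blockWord, maxPrefixSum]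
  | cons j js ih =>
    obtain ⟨hj, hjs⟩ := List.pairwise_cons.1 hjs
    rw [maxPrefixSum_blockWord_cons, cutSum_cons]
    have hmax₀ := le_max_left 0 (maxPrefixSum (blockWord a b js) - b j)
    have hmax := le_max_right 0 (maxPrefixSum (blockWord a b js) - b j)
    by_cases hk : k + 2 ≤ j
    · have ih := ih hjs
      rw [if_pos (by omega), if_pos hk]
      omega
    · rw [cutSum_eq_zero_of_forall_lt a b fun y hy => by have := hj y hy; omega]
      split_ifs <;> omega

lemma maxPrefixSum_blockWord_eq_zero_or_exists_cutSum (hjs : js.Pairwise fun x y => y + 2 ≤ x) :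
    maxPrefixSum (blockWord a b js) = 0 ∨
      ∃ k ∈ js, a k ≠ 0 ∧ maxPrefixSum (blockWord a b js) = cutSum a b js k := by
  induction js with
  | nil => exact Or.inl rfl
  | cons j js ih =>
    obtain ⟨hj, hjs⟩ := List.pairwise_cons.1 hjs
    rw [maxPrefixSum_blockWord_cons]
    by_cases hb : maxPrefixSum (blockWord a b js) ≤ b j
    · rw [max_eq_left (by omega), add_zero]
      by_cases ha : a j = 0
      · exact Or.inl (by rw [ha]; rfl)
      · refine Or.inr ⟨j, List.mem_cons_self, ha, ?_⟩
        rw [cutSum_cons, cutSum_eq_zero_of_forall_lt a b fun y hy => by have := hj y hy; omega]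
        simp
    · rcases ih hjs with h0 | ⟨k, hk, hak, h⟩
      · have hb₀ := (b j).cast_nonneg (α := ℤ)
        omega
      · refine Or.inr ⟨k, List.mem_cons_of_mem _ hk, hak, ?_⟩
        have := hj k hk
        rw [cutSum_cons, if_pos (by omega), if_pos this, ← h]
        omega

end Blocks

def levels (m : MSeg) : List ℤ := ((m.support.image fun s => s.1.2).sort (· ≤ ·)).reverse

lemma pairwise_levels (m : MSeg) : (levels m).Pairwise fun x y => y + 2 ≤ x := by
  rw [levels, List.pairwise_reverse]
  refine (Finset.sortedLT_sort _).pairwise.imp_of_mem fun hx hy hxy => ?_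
  obtain ⟨s, -, rfl⟩ := Finset.mem_image.1 ((Finset.mem_sort _).1 hx)
  obtain ⟨t, -, rfl⟩ := Finset.mem_image.1 ((Finset.mem_sort _).1 hy)
  obtain ⟨p, hp⟩ := s.2.2.1
  obtain ⟨q, hq⟩ := t.2.2.1
  omega

lemma sum_levels_map (m : MSeg) (g : ℤ → ℤ) :
    ((levels m).map g).sum = ∑ j ∈ m.support.image (fun s => s.1.2), g j := by
  rw [levels, List.map_reverse, List.sum_reverse, ← Finset.sum_map_toList]
  exact ((Finset.sort_perm_toList _ _).map g).sum_eq

lemma sigList_eq_blockWord (i : ℤ) (m : MSeg) :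
    sigList i m = blockWord (cnt m i) (cnt m (i + 2)) (levels m) := rfl

lemma cnt_eq_sum_support (m : MSeg) (c j : ℤ) :
    (cnt m c j : ℤ) = ∑ s ∈ m.support, if s.1 = (c, j) then (m s : ℤ) else 0 := by
  by_cases h : SegP (c, j)
  · rw [cnt, dif_pos h, eq_comm]
    refine (Finset.sum_eq_single (⟨(c, j), h⟩ : SegIdx) ?_ ?_).trans (if_pos rfl)
    · exact fun s _ hs => if_neg fun e => hs (Subtype.ext e)
    · intro h0
      rw [if_pos rfl]
      exact_mod_cast Finsupp.notMem_support_iff.1 h0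
  · rw [cnt, dif_neg h, Nat.cast_zero, eq_comm]
    exact Finset.sum_eq_zero fun s _ => if_neg fun hs : s.1 = (c, j) => h (hs ▸ s.2)

lemma sum_support_eq_sum_levels (m : MSeg) (c k : ℤ) :
    (∑ s ∈ m.support, if s.1.1 = c ∧ k ≤ s.1.2 then (m s : ℤ) else 0) =
      ∑ j ∈ m.support.image (fun s => s.1.2), if k ≤ j then (cnt m c j : ℤ) else 0 := by
  calc _ = ∑ s ∈ m.support, ∑ j ∈ m.support.image (fun s => s.1.2),
        if j = s.1.2 then (if s.1.1 = c ∧ k ≤ s.1.2 then (m s : ℤ) else 0) else 0 :=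
        Finset.sum_congr rfl fun s hs => by
          rw [Finset.sum_ite_eq', if_pos (Finset.mem_image_of_mem _ hs)]
    _ = _ := by
      rw [Finset.sum_comm]
      refine Finset.sum_congr rfl fun j _ => ?_
      rw [cnt_eq_sum_support]
      split_ifs with hkj
      · refine Finset.sum_congr rfl fun s _ => ?_
        simp only [Prod.ext_iff]
        grind
      · refine Finset.sum_eq_zero fun s _ => ?_
        grind

lemma le_of_cnt_ne_zero {m : MSeg} {i j : ℤ} (h : cnt m i j ≠ 0) : i ≤ j := by
  by_contra hij
  exact h (dif_neg fun hs => hij hs.2.2)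

lemma Afun_eq_cutSum (i k : ℤ) (m : MSeg) :
    Afun i k m = cutSum (cnt m i) (cnt m (i + 2)) (levels m) k := by
  rw [Afun, Finset.sum_sub_distrib, sum_support_eq_sum_levels, sum_support_eq_sum_levels, cutSum,
    sum_levels_map, Finset.sum_sub_distrib]

lemma epsA_eq_maxPrefixSum_sigList (i : ℤ) (m : MSeg) :
    epsA i m = maxPrefixSum (sigList i m) := by
  rw [sigList_eq_blockWord]
  have hlevels := pairwise_levels m
  refine IsGreatest.csSup_eq ⟨?_, ?_⟩
  · rcases maxPrefixSum_blockWord_eq_zero_or_exists_cutSum hlevels with h | ⟨k, -, hk, h⟩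
    · exact Or.inl h
    · exact Or.inr ⟨k, le_of_cnt_ne_zero hk, h.trans (Afun_eq_cutSum i k m).symm⟩
  · rintro z (rfl | ⟨k, -, rfl⟩)
    · exact maxPrefixSum_nonneg _
    · exact (Afun_eq_cutSum i k m).trans_le (cutSum_le_maxPrefixSum_blockWord hlevels k)

theorem eps_eq_signature_rule_general (i : ℤ) (m : MSeg) (L : List Sign)
    (hred : Relation.ReflTransGen SigStep (sigList i m) L) (hfin : SigReduced L) :
    (L.count Sign.minus : ℤ) = epsA i m := by
  rw [epsA_eq_maxPrefixSum_sigList, maxPrefixSum_eq_of_reflTransGen hred,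
    hfin.count_minus_eq_maxPrefixSum]

/-- `ε_i(m)` equals the number of `−` signs remaining after applying the
signature rule to the signature word of `m`. -/
theorem eps_eq_signature_rule (i : ℤ) (hodd : Odd i) (m : MSeg) (L : List Sign)
    (hred : Relation.ReflTransGen SigStep (sigList i m) L) (hfin : SigReduced L) :
    (L.count Sign.minus : ℤ) = epsA i m :=
  eps_eq_signature_rule_general i m L hred hfin
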